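/- arXiv:math/0601588 — 2 statements merged into one kernel-verified Lean document; each statement's English description precedes it below -/
import Mathlib

section
/- Let E₁ : 0 → M →(α₁) N₁ →(β₁) Ω¹_{B/A} → 0 and E₂ : 0 → M →(α₂) N₂ →(β₂) Ω¹_{B/A} → 0 be two short exact sequences of B-modules, with associated square-zero A-algebra extensions C_{E₁} and C_{E₂} of B by M. If there exists an A-algebra isomorphism φ : C_{E₁} → C_{E₂} satisfying pr ∘ φ = pr and φ(0, α₁(m)) = (0, α₂(m)) for all m ∈ M, then there exists a B-module isomorphism ψ : N₁ → N₂ with β₂ ∘ ψ = β₁ and ψ ∘ α₁ = α₂. (This expresses that the natural map from Ext¹_B(Ω¹_{B/A}, M) to the set of isomorphism classes of square-zero extensions of B by M over A, sending a module extension class E to the class of C_E, is injective.) -/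
noncomputable section

section Aux

open TensorProduct

variable {A B C : Type} [CommRing A] [CommRing B] [CommRing C]
  [Algebra A B] [Algebra A C] [Algebra C B]
  [IsScalarTower A C B] [SMulCommClass A C B]
  {M P : Type} [AddCommGroup M] [Module B M]
  [AddCommGroup P] [Module B P] [Module A P] [Module C P]
  [IsScalarTower A C P] [IsScalarTower C B P]

lemma aux_lift_D (δ : Derivation A C P) (x : C) :
    LinearMap.liftBaseChange B δ.liftKaehlerDifferential
      ((1 : B) ⊗ₜ[C] KaehlerDifferential.D A C x) = δ x := by
  rw [LinearMap.liftBaseChange_tmul, Derivation.liftKaehlerDifferential_comp_D, one_smul]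

lemma aux_beta_comp (β : P →ₗ[B] Ω[B⁄A]) (δ : Derivation A C P)
    (hβδ : ∀ x : C, β (δ x) = KaehlerDifferential.D A B (algebraMap C B x)) :
    β ∘ₗ LinearMap.liftBaseChange B δ.liftKaehlerDifferential
      = KaehlerDifferential.mapBaseChange A C B := by
  have hw : ∀ w : Ω[C⁄A], β (δ.liftKaehlerDifferential w)
      = KaehlerDifferential.map A A C B w := by
    intro w
    have hmem : w ∈ Submodule.span C (Set.range (KaehlerDifferential.D A C)) := by
      rw [KaehlerDifferential.span_range_derivation]; trivial
    induction hmem using Submodule.span_induction with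
    | mem w hw =>
        obtain ⟨x, rfl⟩ := hw
        rw [Derivation.liftKaehlerDifferential_comp_D, KaehlerDifferential.map_D]
        exact hβδ x
    | zero => simp
    | add x y _ _ hx hy => rw [map_add, map_add, map_add, hx, hy]
    | smul c x _ hx =>
        calc β (δ.liftKaehlerDifferential (c • x))
            = β (algebraMap C B c • δ.liftKaehlerDifferential x) := by
              rw [map_smul, algebraMap_smul]
          _ = algebraMap C B c • β (δ.liftKaehlerDifferential x) := map_smul β _ _
          _ = algebraMap C B c • KaehlerDifferential.map A A C B x := by rw [hx]
          _ = c • KaehlerDifferential.map A A C B x := algebraMap_smul _ _ _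
          _ = KaehlerDifferential.map A A C B (c • x) := (map_smul _ _ _).symm
  apply LinearMap.ext
  intro t
  induction t using TensorProduct.induction_on with
  | zero => simp
  | add x y hx hy => simp only [map_add, hx, hy]
  | tmul b w =>
      rw [LinearMap.comp_apply, LinearMap.liftBaseChange_tmul, map_smul, hw,
        KaehlerDifferential.mapBaseChange_tmul]

lemma aux_injective (β : P →ₗ[B] Ω[B⁄A]) (δ : Derivation A C P)
    (hsurj : Function.Surjective (algebraMap C B))
    (hβδ : ∀ x : C, β (δ x) = KaehlerDifferential.D A B (algebraMap C B x))
    (hδ0 : ∀ x : C, algebraMap C B x = 0 → δ x = 0 → x = 0) :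
    Function.Injective (LinearMap.liftBaseChange B δ.liftKaehlerDifferential) := by
  set q := LinearMap.liftBaseChange B δ.liftKaehlerDifferential with hq
  rw [← LinearMap.ker_eq_bot, eq_bot_iff]
  intro ω hω
  rw [LinearMap.mem_ker] at hω
  have h1 : KaehlerDifferential.mapBaseChange A C B ω = 0 := by
    rw [← aux_beta_comp β δ hβδ, LinearMap.comp_apply, hω, map_zero]
  obtain ⟨i', hi'⟩ :=
    ((KaehlerDifferential.exact_kerCotangentToTensor_mapBaseChange A C B hsurj) ω).mp h1
  obtain ⟨i, rfl⟩ := Ideal.toCotangent_surjective _ i'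
  rw [KaehlerDifferential.kerCotangentToTensor_toCotangent] at hi'
  have hδi : δ i.1 = 0 := by
    rw [← aux_lift_D (B := B) δ i.1, ← hq, hi', hω]
  have hi0 : (i : C) = 0 := hδ0 _ (RingHom.mem_ker.mp i.2) hδi
  rw [Submodule.mem_bot, ← hi', hi0, map_zero, TensorProduct.tmul_zero]

lemma aux_surjective (α : M →ₗ[B] P) (β : P →ₗ[B] Ω[B⁄A]) (δ : Derivation A C P)
    (hsurj : Function.Surjective (algebraMap C B))
    (hexact : Function.Exact α β)
    (hβδ : ∀ x : C, β (δ x) = KaehlerDifferential.D A B (algebraMap C B x))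
    (hδM : ∀ m : M, ∃ x : C, δ x = α m) :
    Function.Surjective (LinearMap.liftBaseChange B δ.liftKaehlerDifferential) := by
  set q := LinearMap.liftBaseChange B δ.liftKaehlerDifferential with hq
  have hrange : ∀ x : C, δ x ∈ LinearMap.range q := fun x =>
    ⟨(1 : B) ⊗ₜ[C] KaehlerDifferential.D A C x, aux_lift_D δ x⟩
  have htop : Submodule.map β (LinearMap.range q) = ⊤ := by
    rw [eq_top_iff, ← KaehlerDifferential.span_range_derivation, Submodule.span_le]
    rintro _ ⟨b, rfl⟩
    obtain ⟨x, rfl⟩ := hsurj b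
    exact ⟨δ x, hrange x, hβδ x⟩
  intro n
  have hn : β n ∈ Submodule.map β (LinearMap.range q) := by rw [htop]; trivial
  obtain ⟨p, hp, hpn⟩ := hn
  have hmem : n - p ∈ Set.range α := (hexact (n - p)).mp (by rw [map_sub, hpn, sub_self])
  obtain ⟨m, hm⟩ := hmem
  obtain ⟨x, hx⟩ := hδM m
  obtain ⟨u, hu⟩ := hp
  obtain ⟨v, hv⟩ := hrange x
  refine ⟨u + v, ?_⟩
  rw [map_add, hu, hv, hx, hm]
  abel

end Aux

set_option maxHeartbeats 2000000 in
set_option synthInstance.maxHeartbeats 400000 in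
/-- Let `E₁ : 0 → M --α₁--> N₁ --β₁--> Ω¹_{B/A} → 0` and
`E₂ : 0 → M --α₂--> N₂ --β₂--> Ω¹_{B/A} → 0` be short exact sequences of `B`-modules, and let
`C_{E₁} ⊆ B ⊕ N₁` and `C_{E₂} ⊆ B ⊕ N₂` be the associated square-zero `A`-algebra extensions
of `B` by `M`, where `C_E = {(b, n) | β n = D b}` inside the trivial square-zero extension.
If there is an `A`-algebra isomorphism `φ : C_{E₁} ≃ C_{E₂}` commuting with the projections to
`B` and with `φ (0, α₁ m) = (0, α₂ m)` for all `m`, then there is a `B`-module isomorphism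
`ψ : N₁ ≃ N₂` with `β₂ ∘ ψ = β₁` and `ψ ∘ α₁ = α₂`. -/
theorem module_ext_iso_of_CE_iso
    (A B : Type) [CommRing A] [CommRing B] [Algebra A B]
    (M N₁ N₂ : Type) [AddCommGroup M] [Module B M]
    [AddCommGroup N₁] [Module B N₁] [Module Bᵐᵒᵖ N₁] [IsCentralScalar B N₁]
    [Module A N₁] [IsScalarTower A B N₁] [IsScalarTower A Bᵐᵒᵖ N₁]
    [AddCommGroup N₂] [Module B N₂] [Module Bᵐᵒᵖ N₂] [IsCentralScalar B N₂]
    [Module A N₂] [IsScalarTower A B N₂] [IsScalarTower A Bᵐᵒᵖ N₂]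
    (α₁ : M →ₗ[B] N₁) (β₁ : N₁ →ₗ[B] KaehlerDifferential A B)
    (hα₁ : Function.Injective α₁) (hβ₁ : Function.Surjective β₁)
    (hexact₁ : Function.Exact α₁ β₁)
    (α₂ : M →ₗ[B] N₂) (β₂ : N₂ →ₗ[B] KaehlerDifferential A B)
    (hα₂ : Function.Injective α₂) (hβ₂ : Function.Surjective β₂)
    (hexact₂ : Function.Exact α₂ β₂)
    (CE₁ : Subalgebra A (TrivSqZeroExt B N₁))
    (hCE₁ : ∀ x : TrivSqZeroExt B N₁, x ∈ CE₁ ↔ β₁ x.snd = KaehlerDifferential.D A B x.fst)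
    (CE₂ : Subalgebra A (TrivSqZeroExt B N₂))
    (hCE₂ : ∀ x : TrivSqZeroExt B N₂, x ∈ CE₂ ↔ β₂ x.snd = KaehlerDifferential.D A B x.fst)
    (φ : CE₁ ≃ₐ[A] CE₂)
    (hφpr : ∀ x : CE₁, ((φ x : TrivSqZeroExt B N₂).fst) = (x : TrivSqZeroExt B N₁).fst)
    (hφinr : ∀ (m : M) (x : CE₁), (x : TrivSqZeroExt B N₁) = TrivSqZeroExt.inr (α₁ m) →
      ((φ x : TrivSqZeroExt B N₂)) = TrivSqZeroExt.inr (α₂ m)) :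
    ∃ ψ : N₁ ≃ₗ[B] N₂,
      β₂ ∘ₗ (ψ : N₁ →ₗ[B] N₂) = β₁ ∧ ∀ m : M, ψ (α₁ m) = α₂ m := by
  classical
  -- the projection to B as an A-algebra hom
  let prA : CE₁ →ₐ[A] B := (TrivSqZeroExt.fstHom A B N₁).comp CE₁.val
  have hprA : ∀ x : CE₁, prA x = (x : TrivSqZeroExt B N₁).fst := fun _ => rfl
  letI : Algebra CE₁ B := prA.toRingHom.toAlgebra
  have halg : ∀ x : CE₁, algebraMap CE₁ B x = (x : TrivSqZeroExt B N₁).fst := fun _ => rfl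
  haveI : IsScalarTower A CE₁ B := IsScalarTower.of_algebraMap_eq fun a => (prA.commutes a).symm
  haveI : SMulCommClass A CE₁ B :=
    ⟨fun a c b => by
      simp only [Algebra.smul_def]
      ring⟩
  letI : Module CE₁ N₁ := Module.compHom N₁ prA.toRingHom
  letI : Module CE₁ N₂ := Module.compHom N₂ prA.toRingHom
  have hsmul₁ : ∀ (c : CE₁) (n : N₁), c • n = (c : TrivSqZeroExt B N₁).fst • n := fun _ _ => rfl
  have hsmul₂ : ∀ (c : CE₁) (n : N₂), c • n = (c : TrivSqZeroExt B N₁).fst • n := fun _ _ => rfl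
  haveI : IsScalarTower CE₁ B N₁ :=
    ⟨fun c b n => by
      show (prA c * b) • n = prA c • (b • n)
      rw [mul_smul]⟩
  haveI : IsScalarTower CE₁ B N₂ :=
    ⟨fun c b n => by
      show (prA c * b) • n = prA c • (b • n)
      rw [mul_smul]⟩
  haveI : IsScalarTower A CE₁ N₁ :=
    ⟨fun a c n => by
      show prA (a • c) • n = a • (prA c • n)
      rw [Algebra.smul_def a c, map_mul, AlgHom.commutes, mul_smul, algebraMap_smul]⟩
  haveI : IsScalarTower A CE₁ N₂ :=
    ⟨fun a c n => by
      show prA (a • c) • n = a • (prA c • n)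
      rw [Algebra.smul_def a c, map_mul, AlgHom.commutes, mul_smul, algebraMap_smul]⟩
  -- the two derivations
  let δ₁ : Derivation A CE₁ N₁ :=
    { toFun := fun x => (x : TrivSqZeroExt B N₁).snd
      map_add' := fun x y => rfl
      map_smul' := fun a x => rfl
      map_one_eq_zero' := rfl
      leibniz' := fun x y => by
        show ((x : TrivSqZeroExt B N₁) * (y : TrivSqZeroExt B N₁)).snd = _
        rw [TrivSqZeroExt.snd_mul, IsCentralScalar.op_smul_eq_smul]
        rfl }
  have hδ₁ : ∀ x : CE₁, δ₁ x = (x : TrivSqZeroExt B N₁).snd := fun _ => rfl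
  let δ₂ : Derivation A CE₁ N₂ :=
    { toFun := fun x => (φ x : TrivSqZeroExt B N₂).snd
      map_add' := fun x y => by
        show ((φ (x + y) : TrivSqZeroExt B N₂)).snd = _
        rw [map_add, Subalgebra.coe_add, TrivSqZeroExt.snd_add]
      map_smul' := fun a x => by
        show ((φ (a • x) : TrivSqZeroExt B N₂)).snd = _
        rw [map_smul, SetLike.val_smul, TrivSqZeroExt.snd_smul]
        rfl
      map_one_eq_zero' := by
        show ((φ 1 : TrivSqZeroExt B N₂)).snd = 0
        rw [map_one, OneMemClass.coe_one, TrivSqZeroExt.snd_one]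
      leibniz' := fun x y => by
        show ((φ (x * y) : TrivSqZeroExt B N₂)).snd = _
        rw [map_mul]
        conv_lhs => rw [Subalgebra.coe_mul, TrivSqZeroExt.snd_mul,
          IsCentralScalar.op_smul_eq_smul, hφpr x, hφpr y]
        rfl }
  have hδ₂ : ∀ x : CE₁, δ₂ x = (φ x : TrivSqZeroExt B N₂).snd := fun _ => rfl
  -- hypotheses of the auxiliary lemmas
  have hsurjC : Function.Surjective (algebraMap CE₁ B) := by
    intro b
    obtain ⟨n, hn⟩ := hβ₁ (KaehlerDifferential.D A B b)
    refine ⟨⟨TrivSqZeroExt.inl b + TrivSqZeroExt.inr n, ?_⟩, ?_⟩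
    · rw [hCE₁]
      simp only [TrivSqZeroExt.snd_add, TrivSqZeroExt.snd_inl, TrivSqZeroExt.snd_inr,
        TrivSqZeroExt.fst_add, TrivSqZeroExt.fst_inl, TrivSqZeroExt.fst_inr, zero_add, add_zero]
      exact hn
    · rw [halg]
      simp
  have hβδ₁ : ∀ x : CE₁, β₁ (δ₁ x) = KaehlerDifferential.D A B (algebraMap CE₁ B x) :=
    fun x => (hCE₁ _).mp x.2
  have hβδ₂ : ∀ x : CE₁, β₂ (δ₂ x) = KaehlerDifferential.D A B (algebraMap CE₁ B x) := by
    intro x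
    have h := (hCE₂ _).mp (φ x).2
    rw [hδ₂, h, hφpr x, halg]
  have hδ0₁ : ∀ x : CE₁, algebraMap CE₁ B x = 0 → δ₁ x = 0 → x = 0 := by
    intro x h1 h2
    exact Subtype.ext (TrivSqZeroExt.ext h1 h2)
  have hδ0₂ : ∀ x : CE₁, algebraMap CE₁ B x = 0 → δ₂ x = 0 → x = 0 := by
    intro x h1 h2
    have hker : β₁ (x : TrivSqZeroExt B N₁).snd = 0 := by
      rw [(hCE₁ _).mp x.2, ← halg, h1, map_zero]
    obtain ⟨m, hm⟩ := (hexact₁ _).mp hker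
    have hx : (x : TrivSqZeroExt B N₁) = TrivSqZeroExt.inr (α₁ m) := by
      refine TrivSqZeroExt.ext ?_ ?_
      · rw [← halg, h1, TrivSqZeroExt.fst_inr]
      · rw [TrivSqZeroExt.snd_inr, hm]
    have hφx := hφinr m x hx
    have hm0 : α₂ m = 0 := by
      rw [hδ₂, hφx, TrivSqZeroExt.snd_inr] at h2
      exact h2
    have : m = 0 := hα₂ (by rw [hm0, map_zero])
    refine Subtype.ext ?_
    rw [hx, this, map_zero, TrivSqZeroExt.inr_zero]
    rfl
  have hδM₁ : ∀ m : M, ∃ x : CE₁, δ₁ x = α₁ m := by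
    intro m
    refine ⟨⟨TrivSqZeroExt.inr (α₁ m), ?_⟩, ?_⟩
    · rw [hCE₁]
      simp only [TrivSqZeroExt.snd_inr, TrivSqZeroExt.fst_inr]
      rw [hexact₁.apply_apply_eq_zero m, map_zero]
    · rw [hδ₁, TrivSqZeroExt.snd_inr]
  have hδM₂ : ∀ m : M, ∃ x : CE₁, δ₂ x = α₂ m := by
    intro m
    refine ⟨⟨TrivSqZeroExt.inr (α₁ m), ?_⟩, ?_⟩
    · rw [hCE₁]
      simp only [TrivSqZeroExt.snd_inr, TrivSqZeroExt.fst_inr]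
      rw [hexact₁.apply_apply_eq_zero m, map_zero]
    · rw [hδ₂, hφinr m _ rfl, TrivSqZeroExt.snd_inr]
  -- the two base-changed maps
  set q₁ := LinearMap.liftBaseChange B δ₁.liftKaehlerDifferential with hq₁def
  set q₂ := LinearMap.liftBaseChange B δ₂.liftKaehlerDifferential with hq₂def
  have hq₁ : Function.Bijective q₁ :=
    ⟨aux_injective β₁ δ₁ hsurjC hβδ₁ hδ0₁, aux_surjective α₁ β₁ δ₁ hsurjC hexact₁ hβδ₁ hδM₁⟩
  have hq₂ : Function.Bijective q₂ :=
    ⟨aux_injective β₂ δ₂ hsurjC hβδ₂ hδ0₂, aux_surjective α₂ β₂ δ₂ hsurjC hexact₂ hβδ₂ hδM₂⟩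
  let e₁ := LinearEquiv.ofBijective q₁ hq₁
  let e₂ := LinearEquiv.ofBijective q₂ hq₂
  have hb₁ : β₁ ∘ₗ q₁ = KaehlerDifferential.mapBaseChange A CE₁ B := aux_beta_comp β₁ δ₁ hβδ₁
  have hb₂ : β₂ ∘ₗ q₂ = KaehlerDifferential.mapBaseChange A CE₁ B := aux_beta_comp β₂ δ₂ hβδ₂
  refine ⟨e₁.symm.trans e₂, ?_, ?_⟩
  · apply LinearMap.ext
    intro n
    simp only [LinearMap.comp_apply, LinearEquiv.coe_coe, LinearEquiv.trans_apply]
    calc β₂ (e₂ (e₁.symm n))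
        = KaehlerDifferential.mapBaseChange A CE₁ B (e₁.symm n) :=
          LinearMap.congr_fun hb₂ (e₁.symm n)
      _ = β₁ (q₁ (e₁.symm n)) := (LinearMap.congr_fun hb₁ (e₁.symm n)).symm
      _ = β₁ (e₁ (e₁.symm n)) := rfl
      _ = β₁ n := by rw [e₁.apply_symm_apply]
  · intro m
    have hmem : TrivSqZeroExt.inr (α₁ m) ∈ CE₁ := by
      rw [hCE₁]
      simp only [TrivSqZeroExt.snd_inr, TrivSqZeroExt.fst_inr]
      rw [hexact₁.apply_apply_eq_zero m, map_zero]
    set x : CE₁ := ⟨TrivSqZeroExt.inr (α₁ m), hmem⟩ with hxdef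
    set ω := (1 : B) ⊗ₜ[CE₁] KaehlerDifferential.D A CE₁ x with hωdef
    have h1 : q₁ ω = α₁ m := by
      rw [hωdef, hq₁def, aux_lift_D δ₁ x, hδ₁, TrivSqZeroExt.snd_inr]
    have h2 : q₂ ω = α₂ m := by
      rw [hωdef, hq₂def, aux_lift_D δ₂ x, hδ₂, hφinr m x rfl, TrivSqZeroExt.snd_inr]
    show e₂ (e₁.symm (α₁ m)) = α₂ m
    have h3 : e₁.symm (α₁ m) = ω := by
      rw [LinearEquiv.symm_apply_eq]
      exact h1.symm
    rw [h3]
    exact h2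
end
end

section
/- If the projection pr : C_E → B admits an A-algebra section, i.e. an A-algebra homomorphism σ : B → C_E with pr ∘ σ = id_B, then β admits a B-module section: there exists a B-linear map δ : Ω¹_{B/A} → N with β ∘ δ = id. -/
noncomputable section

/-- Let `E : 0 → M → N --β--> Ω¹_{B/A} → 0` be a short exact sequence of `B`-modules and let
`C_E ⊆ B ⊕ N` (trivial square-zero extension) be the subalgebra
`{(b, n) | β n = D b}`.  If the projection `pr : C_E → B`, `(b, n) ↦ b`, admits an
`A`-algebra section `σ`, then `β` admits a `B`-module section `δ`. -/
theorem beta_section_of_CE_section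
    (A B : Type) [CommRing A] [CommRing B] [Algebra A B]
    (M N : Type) [AddCommGroup M] [Module B M]
    [AddCommGroup N] [Module B N] [Module Bᵐᵒᵖ N] [IsCentralScalar B N]
    [Module A N] [IsScalarTower A B N] [IsScalarTower A Bᵐᵒᵖ N]
    (α : M →ₗ[B] N) (β : N →ₗ[B] KaehlerDifferential A B)
    (hα : Function.Injective α) (hβ : Function.Surjective β)
    (hexact : Function.Exact α β)
    (CE : Subalgebra A (TrivSqZeroExt B N))
    (hCE : ∀ x : TrivSqZeroExt B N, x ∈ CE ↔ β x.snd = KaehlerDifferential.D A B x.fst)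
    (σ : B →ₐ[A] CE)
    (hσ : ∀ b : B, ((σ b : TrivSqZeroExt B N).fst) = b) :
    ∃ δ : KaehlerDifferential A B →ₗ[B] N, β ∘ₗ δ = LinearMap.id := by
  let d : Derivation A B N :=
  { toFun := fun b => ((σ b : TrivSqZeroExt B N).snd)
    map_add' := fun a b => by
      simp only [map_add, Subalgebra.coe_add, TrivSqZeroExt.snd_add]
    map_smul' := fun a b => by
      simp only [map_smul, SetLike.val_smul, TrivSqZeroExt.snd_smul, RingHom.id_apply]
    map_one_eq_zero' := by simp
    leibniz' := fun a b => by
      show ((σ (a * b) : TrivSqZeroExt B N)).snd = _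
      rw [map_mul, Subalgebra.coe_mul, TrivSqZeroExt.snd_mul, hσ, hσ,
        op_smul_eq_smul]
      rfl }
  refine ⟨d.liftKaehlerDifferential, ?_⟩
  apply LinearMap.ext
  intro x
  have hspan : x ∈ Submodule.span B (Set.range (KaehlerDifferential.D A B)) := by
    rw [KaehlerDifferential.span_range_derivation]; trivial
  induction hspan using Submodule.span_induction with
  | mem z hz =>
    obtain ⟨b, rfl⟩ := hz
    have h1 : d.liftKaehlerDifferential (KaehlerDifferential.D A B b) = d b :=
      Derivation.liftKaehlerDifferential_comp_D d b
    simp only [LinearMap.comp_apply, LinearMap.id_apply, h1]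
    have := (hCE _).mp (σ b).2
    rwa [hσ] at this
  | zero => simp
  | add z w _ _ hz hw =>
    simp only [map_add, LinearMap.comp_apply, LinearMap.id_apply] at hz hw ⊢
    rw [hz, hw]
  | smul c z _ hz =>
    simp only [map_smul, LinearMap.comp_apply, LinearMap.id_apply] at hz ⊢
    rw [hz]
end
end
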